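/- Let f : X → Y be a continuous map from a metric space X to a metric ANR Y. Then cat_g f = cat f, where cat_g f (respectively cat f) is the least n ∈ ℕ such that X is the union of n+1 arbitrary subsets (respectively n+1 open subsets) on each of which the restriction of f is nullhomotopic, and ∞ if no such n exists. -/

import Mathlib

universe u

/-- A metrizable topological space `K` is a *metric ANR* if for every metrizable space `Z`
and every closed embedding `e : K → Z`, some open neighborhood of the image of `e` in `Z`
retracts onto the image of `e`. -/
def IsMetricANR (K : Type u) [TopologicalSpace K] : Prop :=
  TopologicalSpace.MetrizableSpace K ∧
  ∀ (Z : Type u) [TopologicalSpace Z], TopologicalSpace.MetrizableSpace Z →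
    ∀ e : K → Z, Topology.IsClosedEmbedding e →
      ∃ (U : Set Z), IsOpen U ∧ Set.range e ⊆ U ∧
        ∃ r : C(U, Z), (∀ u : U, r u ∈ Set.range e) ∧
          ∀ (k : K) (h : e k ∈ U), r ⟨e k, h⟩ = e k

/-- The generalized LS-category `cat_g f` of a map `f : X → Y`: the least `n ∈ ℕ∞` such that
`X` is covered by `n + 1` arbitrary subsets on each of which `f` restricts to a
nullhomotopic map (and `∞` if no such `n` exists). -/
noncomputable def catg {X Y : Type*} [TopologicalSpace X] [TopologicalSpace Y]
    (f : C(X, Y)) : ℕ∞ :=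
  sInf {n : ℕ∞ | ∃ m : ℕ, n = (m : ℕ∞) ∧ ∃ A : Fin (m + 1) → Set X,
    (∀ x, ∃ i, x ∈ A i) ∧ ∀ i, (f.restrict (A i)).Nullhomotopic}

/-- The (classical) LS-category `cat f` of a map `f : X → Y`: the least `n ∈ ℕ∞` such that
`X` is covered by `n + 1` *open* subsets on each of which `f` restricts to a
nullhomotopic map (and `∞` if no such `n` exists). -/
noncomputable def catOpen {X Y : Type*} [TopologicalSpace X] [TopologicalSpace Y]
    (f : C(X, Y)) : ℕ∞ :=
  sInf {n : ℕ∞ | ∃ m : ℕ, n = (m : ℕ∞) ∧ ∃ A : Fin (m + 1) → Set X,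
    (∀ x, ∃ i, x ∈ A i) ∧ ∀ i, IsOpen (A i) ∧ (f.restrict (A i)).Nullhomotopic}

/-!
The Kuratowski map `y ↦ dist y · - dist y₀ ·` embeds `Y` isometrically into the Banach space
`Y →ᵇ ℝ`, with image closed in its convex hull `Z` (Wojdysławski). As `Y` is an ANR, it is then a
retract of some `Z ∩ V` with `V` open, so it suffices to treat maps into `Z ∩ V`. There, a
nullhomotopy of `f` on an arbitrary set `A`, viewed as a map from `A` to paths in `Z ∩ V`, is
extended by a partition of unity (a Dugundji-type construction) to an open `U ⊇ A`: each point of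
`U` receives a convex combination of the paths of nearby points of `A`, which stays in `V` because
`V` contains a ball of uniform radius around each path. The straight segment from `f x` to the
start of the averaged path, followed by that path, contracts `f` on `U`.
-/

open Set Metric Topology unitInterval BoundedContinuousFunction

theorem ContinuousAt.exists_pos_le_forall_dist_lt {α β : Type*} [PseudoMetricSpace α]
    [PseudoMetricSpace β] {f : α → β} {a : α} (hf : ContinuousAt f a) {ε r : ℝ} (hε : 0 < ε)
    (hr : 0 < r) : ∃ η, 0 < η ∧ η ≤ r ∧ ∀ x, dist x a < η → dist (f x) (f a) < ε := by
  obtain ⟨δ, hδ, h⟩ := Metric.continuousAt_iff.1 hf ε hε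
  exact ⟨min δ r, lt_min hδ hr, min_le_right _ _, fun x hx => h (hx.trans_le (min_le_left _ _))⟩

theorem ContinuousMap.exists_pos_forall_ball_subset {K E : Type*} [TopologicalSpace K]
    [CompactSpace K] [PseudoMetricSpace E] {V : Set E} (hV : IsOpen V) (γ : C(K, E))
    (hγ : ∀ t, γ t ∈ V) : ∃ ρ, 0 < ρ ∧ ∀ t, ball (γ t) ρ ⊆ V := by
  obtain ⟨ρ, hρ, hsub⟩ :=
    (isCompact_range γ.continuous).exists_thickening_subset_open hV (range_subset_iff.2 hγ)
  exact ⟨ρ, hρ, fun t => (ball_subset_thickening (mem_range_self t) ρ).trans hsub⟩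

theorem ContinuousMap.homotopic_of_segment_subset {W E : Type*} [TopologicalSpace W]
    [AddCommGroup E] [TopologicalSpace E] [IsTopologicalAddGroup E] [Module ℝ E]
    [ContinuousSMul ℝ E] {S : Set E} (u v : C(W, S)) (h : ∀ w, segment ℝ (u w : E) (v w) ⊆ S) :
    u.Homotopic v :=
  ⟨{ toFun := fun p => ⟨AffineMap.lineMap (u p.2 : E) (v p.2) (p.1 : ℝ),
        h p.2 (lineMap_mem_segment ℝ _ _ p.1.2)⟩
     continuous_toFun := by
       refine Continuous.subtype_mk ?_ _
       simp only [AffineMap.lineMap_apply_module]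
       fun_prop
     map_zero_left := fun w => by simp
     map_one_left := fun w => by simp }⟩

theorem ContinuousMap.homotopic_of_forall_path_mem {W E : Type*} [TopologicalSpace W]
    [TopologicalSpace E] {S : Set E} (u v : C(W, S)) (Γ : C(W, C(I, E)))
    (hΓ : ∀ w t, Γ w t ∈ S) (hu : ∀ w, Γ w 0 = u w) (hv : ∀ w, Γ w 1 = v w) : u.Homotopic v :=
  ⟨{ toFun := fun p => ⟨Γ p.2 p.1, hΓ p.2 p.1⟩
     continuous_toFun := by fun_prop
     map_zero_left := fun w => Subtype.ext (hu w)
     map_one_left := fun w => Subtype.ext (hv w) }⟩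

theorem exists_isOpen_superset_approx_extension {X M : Type*} [MetricSpace X]
    [NormedAddCommGroup M] [NormedSpace ℝ M] {A : Set X} (φ : C(A, M)) (ε : A → ℝ)
    (hε : ∀ a, 0 < ε a) :
    ∃ U : Set X, IsOpen U ∧ A ⊆ U ∧ ∃ G : C(U, M), ∀ x : U,
      G x ∈ convexHull ℝ (range φ) ∧ ∃ a : A, dist (x : X) a < ε a ∧ dist (G x) (φ a) < ε a := by
  choose η hη₀ hηε hηφ using fun a => φ.continuous.continuousAt.exists_pos_le_forall_dist_lt
    (hε a) (hε a)
  set U := ⋃ a : A, ball (a : X) (η a / 2)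
  obtain ⟨p, hp⟩ := PartitionOfUnity.exists_isSubordinate isClosed_univ
    (fun a : A => ((↑) : U → X) ⁻¹' ball (a : X) (η a / 2))
    (fun a => isOpen_ball.preimage continuous_subtype_val)
    (fun x _ => by simpa using mem_iUnion.1 x.2)
  refine ⟨U, isOpen_iUnion fun a => isOpen_ball,
    fun x hx => mem_iUnion.2 ⟨⟨x, hx⟩, mem_ball_self (half_pos (hη₀ _))⟩,
    ⟨fun x => ∑ᶠ a, p a x • φ a, p.continuous_finsum_smul fun a x _ => continuousAt_const⟩,
    fun x => ⟨?_, ?_⟩⟩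
  · exact p.finsum_smul_mem_convex (g := fun a _ => φ a) (mem_univ x)
      (fun a _ => subset_convexHull ℝ _ (mem_range_self a)) (convex_convexHull ℝ _)
  have hsupp : ∀ a, p a x ≠ 0 → dist (x : X) a < η a / 2 := fun a ha => hp a (subset_tsupport _ ha)
  -- the point of the support with the largest radius controls all the others
  obtain ⟨a, ha, hmax⟩ := (p.finsupport x).exists_max_image η
    (Finset.nonempty_of_sum_ne_zero ((p.sum_finsupport (mem_univ x)).trans_ne one_ne_zero))
  rw [p.mem_finsupport] at ha
  refine ⟨a, (hsupp a ha).trans (by linarith [hη₀ a, hηε a]), ?_⟩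
  refine p.finsum_smul_mem_convex (g := fun b _ => φ b) (mem_univ x) (fun b hb => ?_)
    (convex_ball (φ a) (ε a))
  refine hηφ a b ?_
  calc dist (b : X) a ≤ dist (b : X) x + dist (x : X) a := dist_triangle _ _ _
    _ < η b / 2 + η a / 2 := by rw [dist_comm]; exact add_lt_add (hsupp b hb) (hsupp a ha)
    _ ≤ η a := by linarith [hmax b ((p.mem_finsupport x).2 hb)]

theorem Convex.exists_isOpen_superset_nullhomotopic {X E : Type*} [MetricSpace X]
    [NormedAddCommGroup E] [NormedSpace ℝ E] {Z V : Set E} (hZ : Convex ℝ Z) (hV : IsOpen V)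
    (F : C(X, ↥(Z ∩ V))) {A : Set X} (hA : (F.restrict A).Nullhomotopic) :
    ∃ U : Set X, IsOpen U ∧ A ⊆ U ∧ (F.restrict U).Nullhomotopic := by
  obtain ⟨c, ⟨H⟩⟩ := hA
  let γ : C(A, C(I, E)) := ContinuousMap.curry ⟨fun p => (H (p.2, p.1) : E), by fun_prop⟩
  have hγ₀ : ∀ a, γ a 0 = F a := fun a => congrArg Subtype.val (H.apply_zero a)
  choose ρ hρ₀ hρ using fun a => (γ a).exists_pos_forall_ball_subset hV fun t => (H (t, a)).2.2
  choose η hη₀ hηρ hηF using fun a : A =>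
    (continuous_subtype_val.comp F.continuous).continuousAt.exists_pos_le_forall_dist_lt
      (half_pos (hρ₀ a)) (half_pos (hρ₀ a))
  obtain ⟨U, hU, hAU, G, hG⟩ := exists_isOpen_superset_approx_extension γ η hη₀
  have hconvex : Convex ℝ {p : C(I, E) | (∀ t, p t ∈ Z) ∧ p 1 = c} :=
    fun γ₁ h₁ γ₂ h₂ s₁ s₂ hs₁ hs₂ hs => ⟨fun t => hZ (h₁.1 t) (h₂.1 t) hs₁ hs₂ hs, by
      simp [h₁.2, h₂.2, ← add_smul, hs]⟩
  have hGZ : ∀ x, (∀ t, G x t ∈ Z) ∧ G x 1 = c := fun x =>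
    convexHull_min (range_subset_iff.2 fun a =>
      by exact ⟨fun t => (H (t, a)).2.1, congrArg Subtype.val (H.apply_one a)⟩) hconvex (hG x).1
  have hnear : ∀ x : U, ∃ a : A, dist (F x : E) (γ a 0) < ρ a / 2 ∧
      ∀ t, dist (G x t) (γ a t) < ρ a / 2 := fun x => by
    obtain ⟨a, hxa, hGa⟩ := (hG x).2
    exact ⟨a, hγ₀ a ▸ hηF a x hxa, fun t =>
      (ContinuousMap.dist_apply_le_dist t).trans_lt (hGa.trans_le (hηρ a))⟩
  have hGV : ∀ x t, G x t ∈ V := fun x t => by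
    obtain ⟨a, -, ha⟩ := hnear x
    exact hρ a t (mem_ball.2 ((ha t).trans (half_lt_self (hρ₀ a))))
  let G₀ : C(U, ↥(Z ∩ V)) := ⟨fun x => ⟨G x 0, (hGZ x).1 0, hGV x 0⟩, by fun_prop⟩
  have hsegment : (F.restrict U).Homotopic G₀ := by
    refine ContinuousMap.homotopic_of_segment_subset _ _ fun x => ?_
    obtain ⟨a, hFa, hGa⟩ := hnear x
    refine subset_inter (hZ.segment_subset (F x).2.1 ((hGZ x).1 0)) ?_
    calc segment ℝ (F x : E) (G x 0) ⊆ ball (γ a 0) (ρ a / 2) :=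
          (convex_ball _ _).segment_subset (mem_ball.2 hFa) (mem_ball.2 (hGa 0))
      _ ⊆ ball (γ a 0) (ρ a) := ball_subset_ball (half_le_self (hρ₀ a).le)
      _ ⊆ V := hρ a 0
  exact ⟨U, hU, hAU, c, hsegment.trans <| ContinuousMap.homotopic_of_forall_path_mem G₀ _ G
    (fun x t => ⟨(hGZ x).1 t, hGV x t⟩) (fun _ => rfl) fun x => (hGZ x).2⟩

section Kuratowski

variable {Y : Type*} [PseudoMetricSpace Y]

noncomputable def kuratowskiMap (y₀ y : Y) : Y →ᵇ ℝ :=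
  BoundedContinuousFunction.ofNormedAddCommGroup (fun z => dist y z - dist y₀ z) (by fun_prop)
    (dist y y₀) fun z => by simpa [Real.norm_eq_abs] using abs_dist_sub_le y y₀ z

@[simp] theorem kuratowskiMap_apply (y₀ y z : Y) : kuratowskiMap y₀ y z = dist y z - dist y₀ z :=
  rfl

theorem isometry_kuratowskiMap (y₀ : Y) : Isometry (kuratowskiMap y₀) := by
  refine Isometry.of_dist_eq fun y y' => le_antisymm ?_ ?_
  · refine (dist_le dist_nonneg).2 fun z => ?_
    simpa [Real.dist_eq] using abs_dist_sub_le y y' z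
  · simpa [Real.dist_eq] using
      dist_coe_le_dist (f := kuratowskiMap y₀ y) (g := kuratowskiMap y₀ y') y'

theorem kuratowskiMap_convexCombination_apply {ι : Type*} [Fintype ι] (y₀ : Y) {c : ι → ℝ}
    (hc : ∑ i, c i = 1) (b : ι → Y) (y : Y) :
    (∑ i, c i • kuratowskiMap y₀ (b i)) y + dist y₀ y = ∑ i, c i * dist (b i) y := by
  simp only [BoundedContinuousFunction.coe_sum, BoundedContinuousFunction.coe_smul,
    Finset.sum_apply, smul_eq_mul, kuratowskiMap_apply, mul_sub, Finset.sum_sub_distrib,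
    ← Finset.sum_mul, hc, one_mul, sub_add_cancel]

end Kuratowski

theorem mem_range_kuratowskiMap_of_mem_convexHull_of_mem_closure {Y : Type*} [MetricSpace Y]
    (y₀ : Y) {w : Y →ᵇ ℝ} (hw : w ∈ convexHull ℝ (range (kuratowskiMap y₀)))
    (hw' : w ∈ closure (range (kuratowskiMap y₀))) : w ∈ range (kuratowskiMap y₀) := by
  obtain ⟨ι, _, c, z, hc₀, hc₁, hz, rfl⟩ := mem_convexHull_iff_exists_fintype.1 hw
  choose b hb using hz
  obtain rfl : z = fun i => kuratowskiMap y₀ (b i) := funext fun i => (hb i).symm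
  obtain ⟨i, -, hi⟩ := Finset.exists_lt_of_sum_lt (f := 0) (g := c) (s := Finset.univ)
    (by simp [hc₁])
  set w := ∑ i, c i • kuratowskiMap y₀ (b i)
  have hbi : ∀ y, c i * dist (b i) y ≤ dist w (kuratowskiMap y₀ y) := fun y => by
    have hw := dist_coe_le_dist (f := w) (g := kuratowskiMap y₀ y) y
    rw [Real.dist_eq, kuratowskiMap_apply, dist_self, zero_sub, sub_neg_eq_add,
      kuratowskiMap_convexCombination_apply y₀ hc₁] at hw
    exact (Finset.single_le_sum (fun j _ => mul_nonneg (hc₀ j) dist_nonneg)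
      (Finset.mem_univ i)).trans ((le_abs_self _).trans hw)
  have hle : ∀ y, dist w (kuratowskiMap y₀ (b i)) ≤
      (1 + (c i)⁻¹) * dist w (kuratowskiMap y₀ y) := fun y => calc
    dist w (kuratowskiMap y₀ (b i))
        ≤ dist w (kuratowskiMap y₀ y) + dist (b i) y := by
          rw [dist_comm (b i), ← (isometry_kuratowskiMap y₀).dist_eq y]
          exact dist_triangle _ _ _
    _ ≤ (1 + (c i)⁻¹) * dist w (kuratowskiMap y₀ y) := by
          rw [add_mul, one_mul]
          gcongr
          exact (le_inv_mul_iff₀ hi).2 (hbi y)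
  have hpos : 0 < 1 + (c i)⁻¹ := add_pos one_pos (inv_pos.2 hi)
  have hinf : dist w (kuratowskiMap y₀ (b i)) / (1 + (c i)⁻¹) ≤
      infDist w (range (kuratowskiMap y₀)) := by
    refine (le_infDist ⟨_, mem_range_self y₀⟩).2 ?_
    rintro _ ⟨y, rfl⟩
    exact (div_le_iff₀' hpos).2 (hle y)
  rw [infDist_zero_of_mem_closure hw', div_le_iff₀ hpos, zero_mul] at hinf
  exact ⟨b i, (dist_le_zero.1 hinf).symm⟩

theorem isClosedEmbedding_codRestrict_kuratowskiMap {Y : Type*} [MetricSpace Y] (y₀ : Y) :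
    IsClosedEmbedding (codRestrict (kuratowskiMap y₀) (convexHull ℝ (range (kuratowskiMap y₀)))
      fun y => subset_convexHull ℝ _ (mem_range_self y)) := by
  refine ⟨(isometry_kuratowskiMap y₀).isEmbedding.codRestrict _ _, ?_⟩
  rw [range_codRestrict]
  refine isClosed_of_closure_subset fun w hw => ?_
  exact mem_range_kuratowskiMap_of_mem_convexHull_of_mem_closure y₀ w.2
    (continuous_subtype_val.closure_preimage_subset _ hw)

theorem IsMetricANR.exists_retraction {Y : Type u} [TopologicalSpace Y] [Nonempty Y]
    (hY : IsMetricANR Y) :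
    ∃ (E : Type u) (_ : NormedAddCommGroup E) (_ : NormedSpace ℝ E) (Z V : Set E)
      (_ : Convex ℝ Z) (_ : IsOpen V) (i : C(Y, ↥(Z ∩ V))) (r : C(↥(Z ∩ V), Y)),
      r.comp i = .id Y := by
  obtain ⟨y₀⟩ := ‹Nonempty Y›
  have := hY.1
  let := TopologicalSpace.metrizableSpaceMetric Y
  have he := isClosedEmbedding_codRestrict_kuratowskiMap y₀
  obtain ⟨W, hW, heW, r, hr, hre⟩ := hY.2 _ inferInstance _ he
  obtain ⟨V, hV, rfl⟩ := isOpen_induced_iff.1 hW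
  refine ⟨_, inferInstance, inferInstance, _, V, convex_convexHull ℝ _, hV,
    ⟨fun y => ⟨kuratowskiMap y₀ y, subset_convexHull ℝ _ (mem_range_self y),
      heW (mem_range_self y)⟩, (isometry_kuratowskiMap y₀).continuous.subtype_mk _⟩,
    ⟨fun z => he.isEmbedding.toHomeomorph.symm ⟨r ⟨⟨z, z.2.1⟩, z.2.2⟩, hr _⟩, by fun_prop⟩, ?_⟩
  ext y
  exact he.isEmbedding.toHomeomorph.symm_apply_eq.2 (Subtype.ext (hre y _))

theorem IsMetricANR.exists_isOpen_superset_nullhomotopic {X : Type*} [MetricSpace X]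
    {Y : Type u} [TopologicalSpace Y] (hY : IsMetricANR Y) (f : C(X, Y)) {A : Set X}
    (hA : (f.restrict A).Nullhomotopic) :
    ∃ U : Set X, IsOpen U ∧ A ⊆ U ∧ (f.restrict U).Nullhomotopic := by
  have : Nonempty Y := ⟨hA.choose⟩
  obtain ⟨E, _, _, Z, V, hZ, hV, i, r, hri⟩ := hY.exists_retraction
  obtain ⟨U, hU, hAU, hiU⟩ :=
    hZ.exists_isOpen_superset_nullhomotopic hV (i.comp f) (hA.comp_right i)
  refine ⟨U, hU, hAU, ?_⟩
  convert hiU.comp_right r using 1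
  ext x
  exact (DFunLike.congr_fun hri (f x)).symm

theorem catg_eq_catOpen_of_forall_exists_isOpen_superset {X Y : Type*} [TopologicalSpace X]
    [TopologicalSpace Y] (f : C(X, Y))
    (h : ∀ A : Set X, (f.restrict A).Nullhomotopic →
      ∃ U : Set X, IsOpen U ∧ A ⊆ U ∧ (f.restrict U).Nullhomotopic) :
    catg f = catOpen f := by
  refine le_antisymm (sInf_le_sInf ?_) (le_sInf ?_)
  · rintro n ⟨m, hn, A, hcov, hA⟩
    exact ⟨m, hn, A, hcov, fun i => (hA i).2⟩
  · rintro n ⟨m, rfl, A, hcov, hA⟩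
    choose U hU hAU hUnull using fun i => h (A i) (hA i)
    exact sInf_le ⟨m, rfl, U, fun x => (hcov x).imp fun i hi => hAU i hi,
      fun i => ⟨hU i, hUnull i⟩⟩

/-- For a continuous map `f : X → Y` from a metric space `X` to a metric
ANR `Y`, the generalized LS-category of `f` equals the classical LS-category of `f`. -/
theorem catg_eq_catOpen_of_ANR_target {X : Type u} [MetricSpace X]
    {Y : Type u} [TopologicalSpace Y] (hY : IsMetricANR Y) (f : C(X, Y)) :
    catg f = catOpen f :=
  catg_eq_catOpen_of_forall_exists_isOpen_superset f fun _ hA =>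
    hY.exists_isOpen_superset_nullhomotopic f hA
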